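/- Let Φ : (ℝⁿ)^{m+1} × (ℝⁿ)^{m+1} → ℝ be an arbitrary function and define 𝓔(u) = E(u) + Φ(u(t₀),…,u(t_m), u̇(t₀),…,u̇(t_m)) on the admissible class 𝒜. If u minimizes 𝓔 over 𝒜, then on every open subinterval (t_{k−1}, t_k) the function u satisfies the fourth-order Euler–Lagrange equation M u''''(t) + (2K − D M⁻¹ D) ü(t) + K M⁻¹ (K u(t) + g) = 0. -/

import Mathlib

open Matrix Set

/-- The force residual `F(t) = M ü(t) + D u̇(t) + K u(t) + g` of a trajectory `w`. -/
noncomputable def forceResidual {n : ℕ} (M D K : Matrix (Fin n) (Fin n) ℝ) (g : Fin n → ℝ)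
    (w : ℝ → Fin n → ℝ) (s : ℝ) : Fin n → ℝ :=
  M.mulVec (deriv (deriv w) s) + D.mulVec (deriv w s) + K.mulVec (w s) + g

/-- The elastic (spacetime) energy
`E(w) = (1/2) ∫_{t₀}^{t_m} ‖M ẅ + D ẇ + K w + g‖²_{M⁻¹} dt`. -/
noncomputable def elasticEnergy {n : ℕ} (M D K : Matrix (Fin n) (Fin n) ℝ) (g : Fin n → ℝ)
    (t0 tm : ℝ) (w : ℝ → Fin n → ℝ) : ℝ :=
  (1/2) * ∫ s in t0..tm,
    (forceResidual M D K g w s) ⬝ᵥ (M⁻¹.mulVec (forceResidual M D K g w s))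

/-- The least-squares constraint energy
`E_C(w) = (1/2) ∑_{k=0}^{m} (c_A ‖A_k w(t_k) − a_k‖² + c_B ‖B_k ẇ(t_k) − b_k‖²)`,
where the velocity is the derivative within `[t₀, t_m]`. -/
noncomputable def constraintEnergy {n : ℕ} (m : ℕ) (t : ℕ → ℝ) (p q : ℕ → ℕ)
    (A : (k : ℕ) → Matrix (Fin (p k)) (Fin n) ℝ)
    (B : (k : ℕ) → Matrix (Fin (q k)) (Fin n) ℝ)
    (a : (k : ℕ) → Fin (p k) → ℝ) (b : (k : ℕ) → Fin (q k) → ℝ)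
    (cA cB : ℝ) (w : ℝ → Fin n → ℝ) : ℝ :=
  (1/2) * ∑ k ∈ Finset.range (m+1),
    (cA * (((A k).mulVec (w (t k)) - a k) ⬝ᵥ ((A k).mulVec (w (t k)) - a k))
      + cB * (((B k).mulVec (derivWithin w (Icc (t 0) (t m)) (t k)) - b k) ⬝ᵥ
              ((B k).mulVec (derivWithin w (Icc (t 0) (t m)) (t k)) - b k)))

/-- The admissible class `𝒜`: functions that are `C¹` on `[t₀, t_m]` and `C⁴` on each
subinterval `[t_{k−1}, t_k]`, `k = 1, …, m`. -/
def Admissible {n : ℕ} (m : ℕ) (t : ℕ → ℝ) (w : ℝ → Fin n → ℝ) : Prop :=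
  ContDiffOn ℝ 1 w (Icc (t 0) (t m)) ∧
  ∀ k, 1 ≤ k → k ≤ m → ContDiffOn ℝ 4 w (Icc (t (k-1)) (t k))

open MeasureTheory intervalIntegral
open scoped Interval

section Aux
variable {n : ℕ}

/-- Composition of a linear map on a finite-dimensional space with a differentiable curve. -/
lemma LinearMap.comp_hasDerivAt' {E : Type*} [NormedAddCommGroup E] [NormedSpace ℝ E]
    (L : (Fin n → ℝ) →ₗ[ℝ] E) {w : ℝ → Fin n → ℝ} {w' : Fin n → ℝ} {s : ℝ}
    (h : HasDerivAt w w' s) : HasDerivAt (fun x => L (w x)) (L w') s := by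
  have hL := (LinearMap.toContinuousLinearMap L).hasFDerivAt (x := w s)
  have := hL.comp_hasDerivAt s h
  simpa [Function.comp_def] using this

lemma mulVec_hasDerivAt (A : Matrix (Fin n) (Fin n) ℝ) {w : ℝ → Fin n → ℝ} {w' : Fin n → ℝ}
    {s : ℝ} (h : HasDerivAt w w' s) :
    HasDerivAt (fun x => A.mulVec (w x)) (A.mulVec w') s := by
  simpa using (Matrix.mulVecLin A).comp_hasDerivAt' h

lemma dotc_hasDerivAt (c : Fin n → ℝ) {w : ℝ → Fin n → ℝ} {w' : Fin n → ℝ}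
    {s : ℝ} (h : HasDerivAt w w' s) :
    HasDerivAt (fun x => (w x) ⬝ᵥ c) (w' ⬝ᵥ c) s := by
  let L : (Fin n → ℝ) →ₗ[ℝ] ℝ :=
    { toFun := fun v => v ⬝ᵥ c
      map_add' := fun x y => add_dotProduct x y c
      map_smul' := fun r x => smul_dotProduct r x c }
  exact L.comp_hasDerivAt' h

lemma continuous_mulVec' (A : Matrix (Fin n) (Fin n) ℝ) :
    Continuous (fun v : Fin n → ℝ => A.mulVec v) :=
  continuous_const.matrix_mulVec continuous_id

lemma continuousOn_mulVec (A : Matrix (Fin n) (Fin n) ℝ) {w : ℝ → Fin n → ℝ} {s : Set ℝ}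
    (h : ContinuousOn w s) : ContinuousOn (fun x => A.mulVec (w x)) s :=
  (continuous_mulVec' A).comp_continuousOn h

lemma continuousOn_dot {w v : ℝ → Fin n → ℝ} {s : Set ℝ}
    (hw : ContinuousOn w s) (hv : ContinuousOn v s) :
    ContinuousOn (fun x => (w x) ⬝ᵥ (v x)) s := by
  have hc : Continuous (fun p : (Fin n → ℝ) × (Fin n → ℝ) => p.1 ⬝ᵥ p.2) :=
    continuous_fst.dotProduct continuous_snd
  exact hc.comp_continuousOn (hw.prodMk hv)

/-- symmetric matrices move across the dot product -/
lemma dot_symm {A : Matrix (Fin n) (Fin n) ℝ} (hA : Aᵀ = A) (x y : Fin n → ℝ) :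
    x ⬝ᵥ A.mulVec y = (A.mulVec x) ⬝ᵥ y := by
  rw [Matrix.dotProduct_mulVec, ← Matrix.mulVec_transpose, hA]

/-- if the quadratic `ε ↦ ε B + ε² Q` is nonnegative, then `B = 0`. -/
lemma quad_nonneg_imp {B Q : ℝ} (h : ∀ ε : ℝ, 0 ≤ ε * B + ε ^ 2 * Q) : B = 0 := by
  by_contra hB
  have hB2 : 0 < B ^ 2 := by positivity
  have hQ : 0 < |Q| + 1 := by positivity
  have h1 := h (-B / (|Q| + 1))
  have h2 : Q ≤ |Q| := le_abs_self Q
  have h3 : (0:ℝ) < (|Q| + 1)^2 := by positivity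
  rw [div_pow] at h1
  have e1 : -B / (|Q| + 1) * B + (-B) ^ 2 / (|Q| + 1) ^ 2 * Q
      = (B ^ 2 * (Q - (|Q| + 1))) / (|Q| + 1) ^ 2 := by
    field_simp
    ring
  rw [e1, le_div_iff₀ h3, zero_mul] at h1
  nlinarith

/-- derivative of a function vanishing on an open set vanishes there -/
lemma deriv_zero_of_zero_on_open {E : Type*} [NormedAddCommGroup E] [NormedSpace ℝ E]
    {f : ℝ → E} {U : Set ℝ} (hU : IsOpen U)
    (hf : ∀ x ∈ U, f x = 0) : ∀ x ∈ U, deriv f x = 0 := by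
  intro x hx
  have h1 : f =ᶠ[nhds x] (fun _ => (0 : E)) := by
    filter_upwards [hU.mem_nhds hx] with y hy using hf y hy
  rw [h1.deriv_eq, deriv_const]

end Aux

lemma t_strict {m : ℕ} {t : ℕ → ℝ} (ht : ∀ k < m, t k < t (k+1)) :
    ∀ i j, i < j → j ≤ m → t i < t j := by
  intro i j hij hjm
  induction j with
  | zero => omega
  | succ j ih =>
    rcases Nat.lt_or_ge i j with h | h
    · exact (ih (by omega) (by omega)).trans (ht j (by omega))
    · have : i = j := by omega
      subst this
      exact ht i (by omega)

lemma t_mono {m : ℕ} {t : ℕ → ℝ} (ht : ∀ k < m, t k < t (k+1)) :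
    ∀ i j, i ≤ j → j ≤ m → t i ≤ t j := by
  intro i j hij hjm
  rcases Nat.lt_or_ge i j with h | h
  · exact (t_strict ht i j h hjm).le
  · have : i = j := by omega
    subst this; rfl

/-- a point of `(t 0, t m)` which is not a node lies in some open subinterval -/
lemma exists_subinterval {m : ℕ} {t : ℕ → ℝ} (ht : ∀ k < m, t k < t (k+1)) {s : ℝ}
    (hs0 : t 0 < s) (hsm : s ≤ t m) (hnode : ∀ j ≤ m, s ≠ t j) :
    ∃ j, 1 ≤ j ∧ j ≤ m ∧ s ∈ Ioo (t (j-1)) (t j) := by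
  have hsm' : s < t m := lt_of_le_of_ne hsm (hnode m le_rfl)
  have hex : ∃ j, s < t j := ⟨m, hsm'⟩
  classical
  set j := Nat.find hex with hj
  have hjP : s < t j := Nat.find_spec hex
  have hjm : j ≤ m := Nat.find_le hsm'
  have hj1 : 1 ≤ j := by
    by_contra h
    have : j = 0 := by omega
    rw [this] at hjP
    linarith
  have hlow : t (j-1) ≤ s := by
    have := Nat.find_min hex (m := j - 1) (by omega)
    linarith [not_lt.mp this]
  have hlow' : t (j-1) < s := lt_of_le_of_ne hlow (fun h => hnode (j-1) (by omega) h.symm)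
  exact ⟨j, hj1, hjm, hlow', hjP⟩

/-- gluing integrability from continuous representatives on the open subintervals -/
lemma piecewise_intervalIntegrable {m : ℕ} {t : ℕ → ℝ} (ht : ∀ k < m, t k < t (k+1))
    (f : ℝ → ℝ)
    (hf : ∀ k, 1 ≤ k → k ≤ m → ∃ fk : ℝ → ℝ, ContinuousOn fk (Icc (t (k-1)) (t k)) ∧
      ∀ s ∈ Ioo (t (k-1)) (t k), f s = fk s) :
    IntervalIntegrable f volume (t 0) (t m) := by
  suffices H : ∀ j ≤ m, IntervalIntegrable f volume (t 0) (t j) from H m le_rfl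
  intro j hj
  induction j with
  | zero => exact IntervalIntegrable.refl
  | succ j ih =>
    refine (ih (by omega)).trans ?_
    obtain ⟨fk, hfkc, hfke⟩ := hf (j+1) (by omega) (by omega)
    simp only [Nat.add_sub_cancel] at hfkc hfke
    have hlt : t j < t (j+1) := ht j (by omega)
    have hint : IntervalIntegrable fk volume (t j) (t (j+1)) := by
      apply ContinuousOn.intervalIntegrable
      rwa [uIcc_of_le hlt.le]
    apply hint.congr_ae
    have h1 : ∀ᵐ x ∂(volume.restrict (Ι (t j) (t (j+1)))), x ∈ Ι (t j) (t (j+1)) :=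
      ae_restrict_mem measurableSet_uIoc
    have h2 : ∀ᵐ (x : ℝ) ∂(volume.restrict (Ι (t j) (t (j+1)))), x ≠ t (j+1) := by
      apply ae_restrict_of_ae
      rw [MeasureTheory.ae_iff]
      have : {x : ℝ | ¬ x ≠ t (j+1)} = {t (j+1)} := by ext x; simp
      rw [this]
      exact Real.volume_singleton
    filter_upwards [h1, h2] with x hx hne
    rw [uIoc_of_le hlt.le] at hx
    exact (hfke x ⟨hx.1, lt_of_le_of_ne hx.2 hne⟩).symm

lemma F_eq_G {n : ℕ} (M K D : Matrix (Fin n) (Fin n) ℝ) (hMdet : IsUnit M.det)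
    (hcomm : D * M⁻¹ * K = K * M⁻¹ * D) (g v0 v1 v2 v3 v4 : Fin n → ℝ) :
    M.mulVec (M⁻¹.mulVec (M.mulVec v4 + D.mulVec v3 + K.mulVec v2))
      - D.mulVec (M⁻¹.mulVec (M.mulVec v3 + D.mulVec v2 + K.mulVec v1))
      + K.mulVec (M⁻¹.mulVec (M.mulVec v2 + D.mulVec v1 + K.mulVec v0 + g))
    = M.mulVec v4 + ((2:ℝ) • K - D * M⁻¹ * D).mulVec v2
      + (K * M⁻¹).mulVec (K.mulVec v0 + g) := by
  have hMl : ∀ X : Matrix (Fin n) (Fin n) ℝ, M * (M⁻¹ * X) = X := fun X => by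
    rw [← Matrix.mul_assoc, Matrix.mul_nonsing_inv M hMdet, Matrix.one_mul]
  have hc' : D * (M⁻¹ * K) = K * (M⁻¹ * D) := by
    rw [← Matrix.mul_assoc, ← Matrix.mul_assoc, hcomm]
  simp only [Matrix.mulVec_add, Matrix.mulVec_mulVec, Matrix.sub_mulVec,
    Matrix.smul_mulVec, Matrix.add_mulVec, mul_assoc, hMl, hc',
    Matrix.nonsing_inv_mul M hMdet, Matrix.mul_nonsing_inv M hMdet,
    Matrix.mul_one, Matrix.one_mul, Matrix.one_mulVec, two_smul]
  abel

lemma dot_symm' {n : ℕ} {A : Matrix (Fin n) (Fin n) ℝ} (hA : Aᵀ = A) (x y : Fin n → ℝ) :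
    x ⬝ᵥ A.mulVec y = y ⬝ᵥ A.mulVec x := by
  rw [Matrix.dotProduct_mulVec, ← Matrix.mulVec_transpose, hA, dotProduct_comm]

lemma dot_expand {n : ℕ} {A : Matrix (Fin n) (Fin n) ℝ} (hA : Aᵀ = A)
    (x y : Fin n → ℝ) (ε : ℝ) :
    (x + ε • y) ⬝ᵥ A.mulVec (x + ε • y)
      = x ⬝ᵥ A.mulVec x + ε * (2 * (x ⬝ᵥ A.mulVec y)) + ε ^ 2 * (y ⬝ᵥ A.mulVec y) := by
  have h := dot_symm' hA y x
  simp only [Matrix.mulVec_add, Matrix.mulVec_smul, add_dotProduct, smul_dotProduct,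
    dotProduct_add, dotProduct_smul, smul_eq_mul, h]
  ring

lemma dot_self_pos {n : ℕ} {c : Fin n → ℝ} (hc : c ≠ 0) : 0 < c ⬝ᵥ c := by
  have h1 : 0 ≤ c ⬝ᵥ c := Finset.sum_nonneg fun i _ => mul_self_nonneg _
  rcases h1.lt_or_eq with h | h
  · exact h
  · exact absurd ((dotProduct_self_eq_zero).mp h.symm) hc

/-- If `u` minimizes `E(u) + Φ(u(t₀),…,u(t_m), u̇(t₀),…,u̇(t_m))` over the
admissible class, where `Φ` is an arbitrary function of the nodal positions and velocities,
then on every open subinterval `(t_{k−1}, t_k)` the minimizer satisfies the fourth-order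
Euler–Lagrange equation `M u'''' + (2K − D M⁻¹ D) ü + K M⁻¹ (K u + g) = 0`. -/
theorem minimizer_satisfies_euler_lagrange
    (n m : ℕ) (hn : 0 < n) (hm : 0 < m)
    (M K : Matrix (Fin n) (Fin n) ℝ) (hMsymm : M.IsSymm) (hKsymm : K.IsSymm)
    (hMpd : M.PosDef)
    (α β : ℝ) (D : Matrix (Fin n) (Fin n) ℝ) (hD : D = α • M + β • K)
    (g : Fin n → ℝ)
    (t : ℕ → ℝ) (ht : ∀ k < m, t k < t (k+1))
    (Φ : (Fin (m+1) → Fin n → ℝ) → (Fin (m+1) → Fin n → ℝ) → ℝ)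
    (u : ℝ → Fin n → ℝ) (hu : Admissible m t u)
    (hmin : ∀ w : ℝ → Fin n → ℝ, Admissible m t w →
      elasticEnergy M D K g (t 0) (t m) u
          + Φ (fun k => u (t k)) (fun k => derivWithin u (Icc (t 0) (t m)) (t k)) ≤
      elasticEnergy M D K g (t 0) (t m) w
          + Φ (fun k => w (t k)) (fun k => derivWithin w (Icc (t 0) (t m)) (t k))) :
    ∀ k, 1 ≤ k → k ≤ m → ∀ s ∈ Ioo (t (k-1)) (t k),
      M.mulVec (iteratedDeriv 4 u s)
        + ((2:ℝ) • K - D * M⁻¹ * D).mulVec (iteratedDeriv 2 u s)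
        + (K * M⁻¹).mulVec (K.mulVec (u s) + g) = 0 := by
  intro k hk1 hkm s₀ hs₀
  -- ===== basic matrix facts =====
  have hdet : IsUnit M.det := isUnit_iff_ne_zero.mpr hMpd.det_pos.ne'
  have hMM : M * M⁻¹ = 1 := Matrix.mul_nonsing_inv M hdet
  have hMsymm' : Mᵀ = M := hMsymm
  have hKsymm' : Kᵀ = K := hKsymm
  have hMinvsymm : (M⁻¹)ᵀ = M⁻¹ := by
    rw [Matrix.transpose_nonsing_inv, hMsymm']
  have hDsymm : Dᵀ = D := by
    rw [hD, Matrix.transpose_add, Matrix.transpose_smul, Matrix.transpose_smul,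
      hMsymm', hKsymm']
  have hcomm : D * M⁻¹ * K = K * M⁻¹ * D := by
    rw [hD]
    rw [Matrix.add_mul, Matrix.add_mul, Matrix.mul_add, Matrix.smul_mul, Matrix.smul_mul,
      Matrix.mul_smul, Matrix.mul_smul, Matrix.smul_mul, Matrix.smul_mul,
      hMM, Matrix.one_mul]
    rw [Matrix.mul_assoc K M⁻¹ M, Matrix.nonsing_inv_mul M hdet, Matrix.mul_one]
  -- ===== basic interval facts =====
  have hk1m : k - 1 < m := by omega
  have hkk : k - 1 + 1 = k := by omega
  have hab : t (k-1) < t k := by have := ht (k-1) hk1m; rwa [hkk] at this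
  have ht0m : t 0 < t m := t_strict ht 0 m hm le_rfl
  have ht0a : t 0 ≤ t (k-1) := t_mono ht 0 (k-1) (Nat.zero_le _) (by omega)
  have htbm : t k ≤ t m := t_mono ht k m hkm le_rfl
  have hJo : IsOpen (Ioo (t (k-1)) (t k)) := isOpen_Ioo
  have huC1 := hu.1
  have huC4 : ContDiffOn ℝ 4 u (Icc (t (k-1)) (t k)) := hu.2 k hk1 hkm
  have huJ : ContDiffOn ℝ 4 u (Ioo (t (k-1)) (t k)) := huC4.mono Ioo_subset_Icc_self
  -- ===== derivatives of u on J =====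
  obtain ⟨u1, hu1e⟩ : ∃ f : ℝ → Fin n → ℝ, f = deriv u := ⟨_, rfl⟩
  obtain ⟨u2, hu2e⟩ : ∃ f : ℝ → Fin n → ℝ, f = deriv u1 := ⟨_, rfl⟩
  obtain ⟨u3, hu3e⟩ : ∃ f : ℝ → Fin n → ℝ, f = deriv u2 := ⟨_, rfl⟩
  obtain ⟨u4, hu4e⟩ : ∃ f : ℝ → Fin n → ℝ, f = deriv u3 := ⟨_, rfl⟩
  have hu1C : ContDiffOn ℝ 3 u1 (Ioo (t (k-1)) (t k)) := by
    rw [hu1e]; exact huJ.deriv_of_isOpen hJo (by norm_num)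
  have hu2C : ContDiffOn ℝ 2 u2 (Ioo (t (k-1)) (t k)) := by
    rw [hu2e]; exact hu1C.deriv_of_isOpen hJo (by norm_num)
  have hu3C : ContDiffOn ℝ 1 u3 (Ioo (t (k-1)) (t k)) := by
    rw [hu3e]; exact hu2C.deriv_of_isOpen hJo (by norm_num)
  have hu4C : ContinuousOn u4 (Ioo (t (k-1)) (t k)) := by
    rw [hu4e]
    exact (hu3C.deriv_of_isOpen (m := 0) hJo (by norm_num)).continuousOn
  have hd0 : ∀ x ∈ Ioo (t (k-1)) (t k), HasDerivAt u (u1 x) x := by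
    intro x hx
    rw [hu1e]
    exact ((huJ.differentiableOn (by norm_num)).differentiableAt
      (hJo.mem_nhds hx)).hasDerivAt
  have hd1 : ∀ x ∈ Ioo (t (k-1)) (t k), HasDerivAt u1 (u2 x) x := by
    intro x hx
    rw [hu2e]
    exact ((hu1C.differentiableOn (by norm_num)).differentiableAt
      (hJo.mem_nhds hx)).hasDerivAt
  have hd2 : ∀ x ∈ Ioo (t (k-1)) (t k), HasDerivAt u2 (u3 x) x := by
    intro x hx
    rw [hu3e]
    exact ((hu2C.differentiableOn (by norm_num)).differentiableAt
      (hJo.mem_nhds hx)).hasDerivAt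
  have hd3 : ∀ x ∈ Ioo (t (k-1)) (t k), HasDerivAt u3 (u4 x) x := by
    intro x hx
    rw [hu4e]
    exact ((hu3C.differentiableOn (by norm_num)).differentiableAt
      (hJo.mem_nhds hx)).hasDerivAt
  have hu0c : ContinuousOn u (Ioo (t (k-1)) (t k)) := huJ.continuousOn
  have hu1c : ContinuousOn u1 (Ioo (t (k-1)) (t k)) := hu1C.continuousOn
  have hu2c : ContinuousOn u2 (Ioo (t (k-1)) (t k)) := hu2C.continuousOn
  have hu3c : ContinuousOn u3 (Ioo (t (k-1)) (t k)) := hu3C.continuousOn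
  -- the force residual written via u1, u2
  have hfr : forceResidual M D K g u
      = fun s => M.mulVec (u2 s) + D.mulVec (u1 s) + K.mulVec (u s) + g := by
    funext s
    rw [forceResidual, hu2e, hu1e]
  -- ===== rM and its derivatives =====
  obtain ⟨rM, hrMe⟩ : ∃ f : ℝ → Fin n → ℝ,
      f = fun s => M⁻¹.mulVec (M.mulVec (u2 s) + D.mulVec (u1 s) + K.mulVec (u s) + g) :=
    ⟨_, rfl⟩
  obtain ⟨rM1, hrM1e⟩ : ∃ f : ℝ → Fin n → ℝ,
      f = fun s => M⁻¹.mulVec (M.mulVec (u3 s) + D.mulVec (u2 s) + K.mulVec (u1 s)) :=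
    ⟨_, rfl⟩
  obtain ⟨rM2, hrM2e⟩ : ∃ f : ℝ → Fin n → ℝ,
      f = fun s => M⁻¹.mulVec (M.mulVec (u4 s) + D.mulVec (u3 s) + K.mulVec (u2 s)) :=
    ⟨_, rfl⟩
  obtain ⟨Fv, hFve⟩ : ∃ f : ℝ → Fin n → ℝ,
      f = fun s => M.mulVec (rM2 s) - D.mulVec (rM1 s) + K.mulVec (rM s) := ⟨_, rfl⟩
  have hrMd : ∀ x ∈ Ioo (t (k-1)) (t k), HasDerivAt rM (rM1 x) x := by
    intro x hx
    rw [hrMe, hrM1e]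
    exact mulVec_hasDerivAt M⁻¹
      ((((mulVec_hasDerivAt M (hd2 x hx)).add (mulVec_hasDerivAt D (hd1 x hx))).add
        (mulVec_hasDerivAt K (hd0 x hx))).add_const g)
  have hrM1d : ∀ x ∈ Ioo (t (k-1)) (t k), HasDerivAt rM1 (rM2 x) x := by
    intro x hx
    rw [hrM1e, hrM2e]
    exact mulVec_hasDerivAt M⁻¹
      (((mulVec_hasDerivAt M (hd3 x hx)).add (mulVec_hasDerivAt D (hd2 x hx))).add
        (mulVec_hasDerivAt K (hd1 x hx)))
  have hrMc : ContinuousOn rM (Ioo (t (k-1)) (t k)) := by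
    rw [hrMe]
    exact continuousOn_mulVec _ ((((continuousOn_mulVec _ hu2c).add
      (continuousOn_mulVec _ hu1c)).add (continuousOn_mulVec _ hu0c)).add
        continuousOn_const)
  have hrM1c : ContinuousOn rM1 (Ioo (t (k-1)) (t k)) := by
    rw [hrM1e]
    exact continuousOn_mulVec _ (((continuousOn_mulVec _ hu3c).add
      (continuousOn_mulVec _ hu2c)).add (continuousOn_mulVec _ hu1c))
  have hrM2c : ContinuousOn rM2 (Ioo (t (k-1)) (t k)) := by
    rw [hrM2e]
    exact continuousOn_mulVec _ (((continuousOn_mulVec _ hu4C).add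
      (continuousOn_mulVec _ hu3c)).add (continuousOn_mulVec _ hu2c))
  have hFvc : ContinuousOn Fv (Ioo (t (k-1)) (t k)) := by
    rw [hFve]
    exact ((continuousOn_mulVec _ hrM2c).sub (continuousOn_mulVec _ hrM1c)).add
      (continuousOn_mulVec _ hrMc)
  -- the algebraic identity: Fv equals the Euler–Lagrange expression
  have hFG : ∀ x, Fv x = M.mulVec (u4 x) + ((2:ℝ) • K - D * M⁻¹ * D).mulVec (u2 x)
      + (K * M⁻¹).mulVec (K.mulVec (u x) + g) := by
    intro x
    rw [hFve, hrMe, hrM1e, hrM2e]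
    exact F_eq_G M K D hdet hcomm g (u x) (u1 x) (u2 x) (u3 x) (u4 x)
  -- reduce the goal to `Fv s₀ = 0`
  have hIter2 : iteratedDeriv 2 u = u2 := by
    rw [hu2e, hu1e]
    simp [iteratedDeriv_succ, iteratedDeriv_zero]
  have hIter4 : iteratedDeriv 4 u = u4 := by
    rw [hu4e, hu3e, hu2e, hu1e]
    simp [iteratedDeriv_succ, iteratedDeriv_zero]
  rw [hIter2, hIter4, ← hFG s₀]
  by_contra hF0ne
  -- ===== choose the direction and the localization radius =====
  have hcd : 0 < Fv s₀ ⬝ᵥ Fv s₀ := dot_self_pos hF0ne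
  obtain ⟨δ, hδpos, hδ⟩ : ∃ δ > 0, ∀ x, dist x s₀ < δ →
      (0 < Fv s₀ ⬝ᵥ Fv x ∧ x ∈ Ioo (t (k-1)) (t k)) := by
    have hGcd : ContinuousAt (fun x => Fv s₀ ⬝ᵥ Fv x) s₀ :=
      (continuousOn_dot continuousOn_const hFvc).continuousAt (hJo.mem_nhds hs₀)
    have h1 : (fun x => Fv s₀ ⬝ᵥ Fv x) ⁻¹' (Ioi 0) ∈ nhds s₀ :=
      hGcd (isOpen_Ioi.mem_nhds (by simpa using hcd))
    have h2 : Ioo (t (k-1)) (t k) ∈ nhds s₀ := hJo.mem_nhds hs₀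
    obtain ⟨δ, hδpos, hball⟩ := Metric.mem_nhds_iff.mp (Filter.inter_mem h1 h2)
    refine ⟨δ, hδpos, fun x hx => ?_⟩
    have := hball (Metric.mem_ball.mpr hx)
    exact ⟨this.1, this.2⟩
  -- the bump function
  set c : Fin n → ℝ := Fv s₀ with hce
  set ψ : ContDiffBump s₀ := ⟨δ/4, δ/2, by positivity, by linarith⟩ with hψe
  obtain ⟨ψ1, hψ1e⟩ : ∃ f : ℝ → ℝ, f = deriv (⇑ψ) := ⟨_, rfl⟩
  obtain ⟨ψ2, hψ2e⟩ : ∃ f : ℝ → ℝ, f = deriv ψ1 := ⟨_, rfl⟩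
  have hψtop : ContDiff ℝ (⊤:ℕ∞) ⇑ψ := ψ.contDiff
  have hψ1top : ContDiff ℝ (⊤:ℕ∞) ψ1 := by
    rw [hψ1e]; exact (contDiff_infty_iff_deriv.mp hψtop).2
  have hψ2top : ContDiff ℝ (⊤:ℕ∞) ψ2 := by
    rw [hψ2e]; exact (contDiff_infty_iff_deriv.mp hψ1top).2
  have hψd0 : ∀ x, HasDerivAt (⇑ψ) (ψ1 x) x := by
    intro x
    rw [hψ1e]
    exact ((hψtop.differentiable (by simp)) x).hasDerivAt
  have hψd1 : ∀ x, HasDerivAt ψ1 (ψ2 x) x := by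
    intro x
    rw [hψ2e]
    exact ((hψ1top.differentiable (by simp)) x).hasDerivAt
  -- vanishing outside the closed ball of radius δ/2
  have hψ0z : ∀ x ∉ Metric.closedBall s₀ (δ/2), ψ x = 0 := by
    intro x hx
    apply ψ.zero_of_le_dist
    rw [hψe]
    simpa [Metric.mem_closedBall, not_le] using (le_of_lt (by
      simpa [Metric.mem_closedBall, not_le] using hx))
  have hUo : IsOpen (Metric.closedBall s₀ (δ/2))ᶜ := Metric.isClosed_closedBall.isOpen_compl
  have hψ1z : ∀ x ∉ Metric.closedBall s₀ (δ/2), ψ1 x = 0 := by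
    intro x hx
    rw [hψ1e]
    exact deriv_zero_of_zero_on_open hUo (fun y hy => hψ0z y hy) x hx
  have hψ2z : ∀ x ∉ Metric.closedBall s₀ (δ/2), ψ2 x = 0 := by
    intro x hx
    rw [hψ2e]
    exact deriv_zero_of_zero_on_open hUo (fun y hy => hψ1z y hy) x hx
  -- the variation φ = ψ • c and its "L" image
  obtain ⟨Lφ, hLφe⟩ : ∃ f : ℝ → Fin n → ℝ,
      f = fun x => ψ2 x • M.mulVec c + ψ1 x • D.mulVec c + ψ x • K.mulVec c := ⟨_, rfl⟩
  have hLφcont : Continuous Lφ := by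
    rw [hLφe]
    exact ((hψ2top.continuous.smul continuous_const).add
      (hψ1top.continuous.smul continuous_const)).add
      (hψtop.continuous.smul continuous_const)
  have hLφz : ∀ x ∉ Metric.closedBall s₀ (δ/2), Lφ x = 0 := by
    intro x hx
    rw [hLφe]
    simp [hψ0z x hx, hψ1z x hx, hψ2z x hx]
  -- ===== integrability of the three integrands =====
  obtain ⟨f0, hf0e⟩ : ∃ f : ℝ → ℝ, f = fun s =>
      (forceResidual M D K g u s) ⬝ᵥ M⁻¹.mulVec (forceResidual M D K g u s) := ⟨_, rfl⟩
  obtain ⟨cr, hcre⟩ : ∃ f : ℝ → ℝ, f = fun s =>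
      (forceResidual M D K g u s) ⬝ᵥ M⁻¹.mulVec (Lφ s) := ⟨_, rfl⟩
  obtain ⟨q3, hq3e⟩ : ∃ f : ℝ → ℝ, f = fun s => (Lφ s) ⬝ᵥ M⁻¹.mulVec (Lφ s) := ⟨_, rfl⟩
  have hrep : ∀ j, 1 ≤ j → j ≤ m → ∃ rj : ℝ → Fin n → ℝ,
      ContinuousOn rj (Icc (t (j-1)) (t j)) ∧
      ∀ s ∈ Ioo (t (j-1)) (t j), forceResidual M D K g u s = rj s := by
    intro j h1 h2
    have hjlt : t (j-1) < t j := by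
      have := ht (j-1) (by omega)
      rwa [show j-1+1=j by omega] at this
    have hud : UniqueDiffOn ℝ (Icc (t (j-1)) (t j)) := uniqueDiffOn_Icc hjlt
    have hC : ContDiffOn ℝ 4 u (Icc (t (j-1)) (t j)) := hu.2 j h1 h2
    have hv1C : ContDiffOn ℝ 3 (derivWithin u (Icc (t (j-1)) (t j)))
        (Icc (t (j-1)) (t j)) := hC.derivWithin hud (by norm_num)
    have hv2C : ContDiffOn ℝ 2
        (derivWithin (derivWithin u (Icc (t (j-1)) (t j))) (Icc (t (j-1)) (t j)))
        (Icc (t (j-1)) (t j)) := hv1C.derivWithin hud (by norm_num)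
    refine ⟨fun s => M.mulVec
        (derivWithin (derivWithin u (Icc (t (j-1)) (t j))) (Icc (t (j-1)) (t j)) s)
      + D.mulVec (derivWithin u (Icc (t (j-1)) (t j)) s) + K.mulVec (u s) + g, ?_, ?_⟩
    · exact (((continuousOn_mulVec _ hv2C.continuousOn).add
        (continuousOn_mulVec _ hv1C.continuousOn)).add
        (continuousOn_mulVec _ hC.continuousOn)).add continuousOn_const
    · intro s hs
      have hnb : Icc (t (j-1)) (t j) ∈ nhds s := Icc_mem_nhds hs.1 hs.2
      have e1' : ∀ y ∈ Ioo (t (j-1)) (t j),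
          derivWithin u (Icc (t (j-1)) (t j)) y = deriv u y := fun y hy =>
        derivWithin_of_mem_nhds (Icc_mem_nhds hy.1 hy.2)
      have e1 : derivWithin u (Icc (t (j-1)) (t j)) s = deriv u s :=
        derivWithin_of_mem_nhds hnb
      have e2 : derivWithin (derivWithin u (Icc (t (j-1)) (t j)))
          (Icc (t (j-1)) (t j)) s = deriv (deriv u) s := by
        rw [derivWithin_of_mem_nhds hnb]
        apply Filter.EventuallyEq.deriv_eq
        filter_upwards [isOpen_Ioo.mem_nhds hs] with y hy using e1' y hy
      simp only [forceResidual]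
      rw [← e2, ← e1]
  have hI0 : IntervalIntegrable f0 volume (t 0) (t m) := by
    apply piecewise_intervalIntegrable ht
    intro j h1 h2
    obtain ⟨rj, hrjc, hrje⟩ := hrep j h1 h2
    refine ⟨fun s => rj s ⬝ᵥ M⁻¹.mulVec (rj s), continuousOn_dot hrjc (continuousOn_mulVec _ hrjc), ?_⟩
    intro s hs
    simp only [hf0e, hrje s hs]
  have hI1 : IntervalIntegrable cr volume (t 0) (t m) := by
    apply piecewise_intervalIntegrable ht
    intro j h1 h2
    obtain ⟨rj, hrjc, hrje⟩ := hrep j h1 h2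
    refine ⟨fun s => rj s ⬝ᵥ M⁻¹.mulVec (Lφ s),
      continuousOn_dot hrjc (continuousOn_mulVec _ hLφcont.continuousOn), ?_⟩
    intro s hs
    simp only [hcre, hrje s hs]
  have hI2 : IntervalIntegrable q3 volume (t 0) (t m) := by
    rw [hq3e]
    exact (continuousOn_dot hLφcont.continuousOn
      (continuousOn_mulVec _ hLφcont.continuousOn)).intervalIntegrable
  -- ===== the first variation vanishes =====
  have hnode_out : ∀ j ≤ m, t j ∉ Metric.closedBall s₀ (δ/2) := by
    intro j hj hmem
    have hball : t j ∈ Ioo (t (k-1)) (t k) :=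
      (hδ (t j) (lt_of_le_of_lt (Metric.mem_closedBall.mp hmem) (by linarith))).2
    rcases le_or_gt j (k-1) with h | h
    · exact absurd (t_mono ht j (k-1) h (by omega)) (not_le.mpr hball.1)
    · exact absurd (t_mono ht k j (by omega) hj) (not_le.mpr hball.2)
  have hBv : ∫ s in (t 0)..(t m), cr s = 0 := by
    apply quad_nonneg_imp (Q := (1/2) * ∫ s in (t 0)..(t m), q3 s)
    intro ε
    obtain ⟨w, hwe⟩ : ∃ w : ℝ → Fin n → ℝ, w = fun x => u x + (ε * ψ x) • c := ⟨_, rfl⟩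
    have hφC : ∀ N : ℕ∞, ContDiff ℝ N (fun x : ℝ => (ε * ψ x) • c) := fun N =>
      (contDiff_const.mul (hψtop.of_le (by exact_mod_cast le_top))).smul contDiff_const
    have hwAdm : Admissible m t w := by
      constructor
      · rw [hwe]
        exact hu.1.add ((hφC 1).contDiffOn)
      · intro j hj1 hj2
        rw [hwe]
        exact (hu.2 j hj1 hj2).add ((hφC 4).contDiffOn)
    have hweq : ∀ x ∉ Metric.closedBall s₀ (δ/2), w x = u x := by
      intro x hx
      rw [hwe]
      simp [hψ0z x hx]
    have hΦ1 : (fun j : Fin (m+1) => w (t j)) = fun j : Fin (m+1) => u (t j) := by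
      funext j
      exact hweq (t j) (hnode_out j (by omega))
    have hΦ2 : (fun j : Fin (m+1) => derivWithin w (Icc (t 0) (t m)) (t j))
        = fun j : Fin (m+1) => derivWithin u (Icc (t 0) (t m)) (t j) := by
      funext j
      apply Filter.EventuallyEq.derivWithin_eq
      · have hU : (Metric.closedBall s₀ (δ/2))ᶜ ∈ nhds (t j) :=
          hUo.mem_nhds (hnode_out j (by omega))
        exact Filter.eventuallyEq_of_mem (nhdsWithin_le_nhds hU) fun y hy => hweq y hy
      · exact hweq (t j) (hnode_out j (by omega))
    have hEle : elasticEnergy M D K g (t 0) (t m) u ≤ elasticEnergy M D K g (t 0) (t m) w := by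
      have h := hmin w hwAdm
      rw [hΦ1, hΦ2] at h
      linarith
    -- a.e. second-order expansion of the integrand
    have hae : ∀ᵐ x ∂(volume.restrict (Ι (t 0) (t m))),
        (forceResidual M D K g w x) ⬝ᵥ M⁻¹.mulVec (forceResidual M D K g w x)
        = f0 x + (ε * 2) * cr x + ε^2 * q3 x := by
      have hmem := ae_restrict_mem (μ := volume) (s := Ι (t 0) (t m)) measurableSet_uIoc
      have hS : ∀ᵐ x ∂(volume.restrict (Ι (t 0) (t m))), x ∉ t '' (Iic m) :=
        ae_restrict_of_ae ((MeasureTheory.measure_eq_zero_iff_ae_notMem).mp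
          (((finite_Iic m).image t).measure_zero volume))
      filter_upwards [hmem, hS] with x hx hxS
      rw [uIoc_of_le ht0m.le] at hx
      have hnode : ∀ j ≤ m, x ≠ t j := fun j hj hxe => hxS ⟨j, hj, hxe.symm⟩
      obtain ⟨j, hj1, hj2, hxJ⟩ := exists_subinterval ht hx.1 hx.2 hnode
      have hCj : ContDiffOn ℝ 4 u (Ioo (t (j-1)) (t j)) :=
        (hu.2 j hj1 hj2).mono Ioo_subset_Icc_self
      have hdu : ∀ y ∈ Ioo (t (j-1)) (t j), DifferentiableAt ℝ u y := fun y hy =>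
        (hCj.differentiableOn (by norm_num)).differentiableAt (isOpen_Ioo.mem_nhds hy)
      have hφd : ∀ y : ℝ, HasDerivAt (fun z => (ε * ψ z) • c) ((ε * ψ1 y) • c) y :=
        fun y => ((hψd0 y).const_mul ε).smul_const c
      have hwd : ∀ y ∈ Ioo (t (j-1)) (t j), deriv w y = deriv u y + (ε * ψ1 y) • c := by
        intro y hy
        rw [hwe]
        exact (((hdu y hy).hasDerivAt).add (hφd y)).deriv
      have hw2 : deriv (deriv w) x = deriv (deriv u) x + (ε * ψ2 x) • c := by
        have hev : deriv w =ᶠ[nhds x] fun y => deriv u y + (ε * ψ1 y) • c := by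
          filter_upwards [isOpen_Ioo.mem_nhds hxJ] with y hy using hwd y hy
        rw [hev.deriv_eq]
        have hdu1 : DifferentiableAt ℝ (deriv u) x :=
          ((hCj.deriv_of_isOpen (m := 3) isOpen_Ioo (by norm_num)).differentiableOn
            (by norm_num)).differentiableAt (isOpen_Ioo.mem_nhds hxJ)
        exact ((hdu1.hasDerivAt).add (((hψd1 x).const_mul ε).smul_const c)).deriv
      have hres : forceResidual M D K g w x = forceResidual M D K g u x + ε • Lφ x := by
        have hwx : w x = u x + (ε * ψ x) • c := by rw [hwe]
        simp only [forceResidual, hw2, hwd x hxJ, hwx, hLφe]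
        simp only [Matrix.mulVec_add, Matrix.mulVec_smul, smul_add, smul_smul]
        module
      have hexp := dot_expand hMinvsymm (forceResidual M D K g u x) (Lφ x) ε
      rw [hres]
      simp only [hf0e, hcre, hq3e]
      rw [hexp]
      ring
    have haux1 : IntervalIntegrable (fun x => (ε * 2) * cr x) volume (t 0) (t m) :=
      hI1.const_mul _
    have haux2 : IntervalIntegrable (fun x => ε^2 * q3 x) volume (t 0) (t m) :=
      hI2.const_mul _
    have hEw : elasticEnergy M D K g (t 0) (t m) w
        = elasticEnergy M D K g (t 0) (t m) u + ε * (∫ s in (t 0)..(t m), cr s)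
          + ε^2 * ((1/2) * ∫ s in (t 0)..(t m), q3 s) := by
      rw [elasticEnergy, elasticEnergy]
      rw [intervalIntegral.integral_congr_ae
        ((MeasureTheory.ae_restrict_iff' measurableSet_uIoc).mp hae)]
      rw [intervalIntegral.integral_add (hI0.add haux1) haux2,
        intervalIntegral.integral_add hI0 haux1,
        intervalIntegral.integral_const_mul, intervalIntegral.integral_const_mul]
      simp only [hf0e]
      ring
    have := hEle
    rw [hEw] at this
    linarith
  -- ===== the first variation is positive: contradiction =====
  obtain ⟨p, hpe⟩ : ∃ p : ℝ, p = s₀ - 3*δ/4 := ⟨_, rfl⟩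
  obtain ⟨q, hqe⟩ : ∃ q : ℝ, q = s₀ + 3*δ/4 := ⟨_, rfl⟩
  have hpq : p ≤ q := by rw [hpe, hqe]; linarith
  have hmemJ : ∀ x, p ≤ x → x ≤ q → (0 < c ⬝ᵥ Fv x ∧ x ∈ Ioo (t (k-1)) (t k)) := by
    intro x h1 h2
    apply hδ
    rw [Real.dist_eq, abs_lt]
    rw [hpe] at h1; rw [hqe] at h2
    constructor <;> linarith
  have hsub : uIcc p q ⊆ Ioo (t (k-1)) (t k) := by
    rw [uIcc_of_le hpq]
    intro x hx
    exact (hmemJ x hx.1 hx.2).2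
  have hpJ : p ∈ Ioo (t (k-1)) (t k) := (hmemJ p le_rfl hpq).2
  have hqJ : q ∈ Ioo (t (k-1)) (t k) := (hmemJ q hpq le_rfl).2
  have ht0p : t 0 ≤ p := le_trans ht0a hpJ.1.le
  have hqtm : q ≤ t m := le_trans hqJ.2.le htbm
  have hout : ∀ x : ℝ, x ≤ p ∨ q ≤ x → x ∉ Metric.closedBall s₀ (δ/2) := by
    intro x hx
    rw [Metric.mem_closedBall, Real.dist_eq, not_le]
    rcases hx with h | h
    · rw [hpe] at h
      rw [abs_sub_comm, abs_of_nonneg (by linarith)]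
      linarith
    · rw [hqe] at h
      rw [abs_of_nonneg (by linarith)]
      linarith
  have hcr_out : ∀ x : ℝ, x ≤ p ∨ q ≤ x → cr x = 0 := by
    intro x hx
    rw [hcre]
    simp [hLφz x (hout x hx)]
  -- split the integral of cr
  have hIpq : IntervalIntegrable cr volume p q := by
    apply hI1.mono_set
    rw [uIcc_of_le hpq, uIcc_of_le ht0m.le]
    exact Icc_subset_Icc ht0p hqtm
  have hI0p : IntervalIntegrable cr volume (t 0) p := by
    apply hI1.mono_set
    rw [uIcc_of_le ht0p, uIcc_of_le ht0m.le]
    exact Icc_subset_Icc le_rfl (le_trans hpq hqtm)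
  have hIqm : IntervalIntegrable cr volume q (t m) := by
    apply hI1.mono_set
    rw [uIcc_of_le hqtm, uIcc_of_le ht0m.le]
    exact Icc_subset_Icc (le_trans ht0p hpq) le_rfl
  have hz1 : (∫ s in (t 0)..p, cr s) = 0 := by
    rw [intervalIntegral.integral_congr (g := fun _ => (0:ℝ))
      (fun x hx => hcr_out x (Or.inl ((uIcc_of_le ht0p ▸ hx).2)))]
    simp
  have hz2 : (∫ s in q..(t m), cr s) = 0 := by
    rw [intervalIntegral.integral_congr (g := fun _ => (0:ℝ))
      (fun x hx => hcr_out x (Or.inr ((uIcc_of_le hqtm ▸ hx).1)))]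
    simp
  have hmid : (∫ s in p..q, cr s) = 0 := by
    have e1 := intervalIntegral.integral_add_adjacent_intervals hI0p hIpq
    have e2 := intervalIntegral.integral_add_adjacent_intervals (hI0p.trans hIpq) hIqm
    rw [← e1, hBv] at e2
    linarith [hz1, hz2, e2]
  -- rewrite cr as bump-weighted combination
  have hcr_eq : ∀ x, cr x = (rM x ⬝ᵥ M.mulVec c) * ψ2 x + (rM x ⬝ᵥ D.mulVec c) * ψ1 x
      + (rM x ⬝ᵥ K.mulVec c) * ψ x := by
    intro x
    have h0 : forceResidual M D K g u x
        = M.mulVec (u2 x) + D.mulVec (u1 x) + K.mulVec (u x) + g := by rw [hfr]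
    rw [hcre]
    show forceResidual M D K g u x ⬝ᵥ M⁻¹.mulVec (Lφ x) = _
    rw [dot_symm hMinvsymm, h0, ← congrFun hrMe x]
    rw [hLφe]
    show rM x ⬝ᵥ (ψ2 x • M.mulVec c + ψ1 x • D.mulVec c + ψ x • K.mulVec c) = _
    simp only [dotProduct_add, dotProduct_smul, smul_eq_mul]
    ring
  -- integration by parts (twice for the ψ2 term, once for the ψ1 term)
  have hψp0 : (ψ : ℝ → ℝ) p = 0 := hψ0z p (hout p (Or.inl le_rfl))
  have hψq0 : (ψ : ℝ → ℝ) q = 0 := hψ0z q (hout q (Or.inr le_rfl))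
  have hψ1p0 : ψ1 p = 0 := hψ1z p (hout p (Or.inl le_rfl))
  have hψ1q0 : ψ1 q = 0 := hψ1z q (hout q (Or.inr le_rfl))
  have hIrM1M : IntervalIntegrable (fun x => rM1 x ⬝ᵥ M.mulVec c) volume p q :=
    (continuousOn_dot (hrM1c.mono hsub) continuousOn_const).intervalIntegrable
  have hIrM2M : IntervalIntegrable (fun x => rM2 x ⬝ᵥ M.mulVec c) volume p q :=
    (continuousOn_dot (hrM2c.mono hsub) continuousOn_const).intervalIntegrable
  have hIrM1D : IntervalIntegrable (fun x => rM1 x ⬝ᵥ D.mulVec c) volume p q :=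
    (continuousOn_dot (hrM1c.mono hsub) continuousOn_const).intervalIntegrable
  have hIψ : IntervalIntegrable (fun x => ψ1 x) volume p q :=
    (hψ1top.continuous.intervalIntegrable p q)
  have hIψ2 : IntervalIntegrable ψ2 volume p q :=
    (hψ2top.continuous.intervalIntegrable p q)
  have ibp1 : (∫ x in p..q, (rM x ⬝ᵥ M.mulVec c) * ψ2 x)
      = - ∫ x in p..q, (rM1 x ⬝ᵥ M.mulVec c) * ψ1 x := by
    have h := intervalIntegral.integral_mul_deriv_eq_deriv_mul
      (u := fun y => rM y ⬝ᵥ M.mulVec c) (u' := fun y => rM1 y ⬝ᵥ M.mulVec c)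
      (v := ψ1) (v' := ψ2)
      (fun x hx => dotc_hasDerivAt _ (hrMd x (hsub hx)))
      (fun x hx => hψd1 x) hIrM1M hIψ2
    rw [h, hψ1p0, hψ1q0]
    ring
  have ibp2 : (∫ x in p..q, (rM1 x ⬝ᵥ M.mulVec c) * ψ1 x)
      = - ∫ x in p..q, (rM2 x ⬝ᵥ M.mulVec c) * ψ x := by
    have h := intervalIntegral.integral_mul_deriv_eq_deriv_mul
      (u := fun y => rM1 y ⬝ᵥ M.mulVec c) (u' := fun y => rM2 y ⬝ᵥ M.mulVec c)
      (v := (ψ : ℝ → ℝ)) (v' := ψ1)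
      (fun x hx => dotc_hasDerivAt _ (hrM1d x (hsub hx)))
      (fun x hx => hψd0 x) hIrM2M hIψ
    rw [h, hψp0, hψq0]
    ring
  have ibp3 : (∫ x in p..q, (rM x ⬝ᵥ D.mulVec c) * ψ1 x)
      = - ∫ x in p..q, (rM1 x ⬝ᵥ D.mulVec c) * ψ x := by
    have h := intervalIntegral.integral_mul_deriv_eq_deriv_mul
      (u := fun y => rM y ⬝ᵥ D.mulVec c) (u' := fun y => rM1 y ⬝ᵥ D.mulVec c)
      (v := (ψ : ℝ → ℝ)) (v' := ψ1)
      (fun x hx => dotc_hasDerivAt _ (hrMd x (hsub hx)))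
      (fun x hx => hψd0 x) hIrM1D hIψ
    rw [h, hψp0, hψq0]
    ring
  -- assemble: ∫ cr over p..q equals ∫ (c ⬝ᵥ Fv) ψ
  have hIA2 : IntervalIntegrable (fun x => (rM x ⬝ᵥ M.mulVec c) * ψ2 x) volume p q :=
    ((continuousOn_dot (hrMc.mono hsub) continuousOn_const).mul
      hψ2top.continuous.continuousOn).intervalIntegrable
  have hIA1 : IntervalIntegrable (fun x => (rM x ⬝ᵥ D.mulVec c) * ψ1 x) volume p q :=
    ((continuousOn_dot (hrMc.mono hsub) continuousOn_const).mul
      hψ1top.continuous.continuousOn).intervalIntegrable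
  have hIA0 : IntervalIntegrable (fun x => (rM x ⬝ᵥ K.mulVec c) * ψ x) volume p q :=
    ((continuousOn_dot (hrMc.mono hsub) continuousOn_const).mul
      hψtop.continuous.continuousOn).intervalIntegrable
  have hIB2 : IntervalIntegrable (fun x => (rM2 x ⬝ᵥ M.mulVec c) * ψ x) volume p q :=
    ((continuousOn_dot (hrM2c.mono hsub) continuousOn_const).mul
      hψtop.continuous.continuousOn).intervalIntegrable
  have hIB1 : IntervalIntegrable (fun x => (rM1 x ⬝ᵥ D.mulVec c) * ψ x) volume p q :=
    ((continuousOn_dot (hrM1c.mono hsub) continuousOn_const).mul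
      hψtop.continuous.continuousOn).intervalIntegrable
  have hkey : (∫ s in p..q, cr s) = ∫ x in p..q, (c ⬝ᵥ Fv x) * ψ x := by
    rw [intervalIntegral.integral_congr (g := fun x => (rM x ⬝ᵥ M.mulVec c) * ψ2 x
      + (rM x ⬝ᵥ D.mulVec c) * ψ1 x + (rM x ⬝ᵥ K.mulVec c) * ψ x)
      (fun x _ => hcr_eq x)]
    rw [intervalIntegral.integral_add (hIA2.add hIA1) hIA0,
      intervalIntegral.integral_add hIA2 hIA1, ibp1, ibp2, ibp3]
    have e3 : (∫ x in p..q, (rM2 x ⬝ᵥ M.mulVec c) * ψ x)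
        - (∫ x in p..q, (rM1 x ⬝ᵥ D.mulVec c) * ψ x)
        + (∫ x in p..q, (rM x ⬝ᵥ K.mulVec c) * ψ x)
        = ∫ x in p..q, (c ⬝ᵥ Fv x) * ψ x := by
      rw [← intervalIntegral.integral_sub hIB2 hIB1,
        ← intervalIntegral.integral_add (hIB2.sub hIB1) hIA0]
      apply intervalIntegral.integral_congr
      intro x _
      have eF : c ⬝ᵥ Fv x = (rM2 x ⬝ᵥ M.mulVec c) - (rM1 x ⬝ᵥ D.mulVec c)
          + (rM x ⬝ᵥ K.mulVec c) := by
        rw [dot_symm hMsymm' (rM2 x) c, dot_symm hDsymm (rM1 x) c,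
          dot_symm hKsymm' (rM x) c]
        rw [dotProduct_comm c (Fv x), hFve]
        show (M.mulVec (rM2 x) - D.mulVec (rM1 x) + K.mulVec (rM x)) ⬝ᵥ c = _
        rw [add_dotProduct, sub_dotProduct]
      simp only [eF]
      ring
    linarith [e3]
  -- positivity of ∫ (c ⬝ᵥ Fv) ψ
  have hnonneg : ∀ x ∈ Icc p q, 0 ≤ (c ⬝ᵥ Fv x) * ψ x := by
    intro x hx
    rcases eq_or_ne (ψ x) 0 with h | h
    · rw [h, mul_zero]
    · have hxs : x ∈ Metric.ball s₀ (δ/2) := by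
        rw [← ψ.support_eq]
        exact h
      have hcF : 0 < c ⬝ᵥ Fv x := (hδ x (lt_trans (Metric.mem_ball.mp hxs) (by linarith))).1
      exact le_of_lt (mul_pos hcF (lt_of_le_of_ne ψ.nonneg (Ne.symm h)))
  have hIh : IntervalIntegrable (fun x => (c ⬝ᵥ Fv x) * ψ x) volume p q :=
    ((continuousOn_dot continuousOn_const (hFvc.mono hsub)).mul
      hψtop.continuous.continuousOn).intervalIntegrable
  have hi1i2 : s₀ - δ/4 ≤ s₀ + δ/4 := by linarith
  have hpi1 : p ≤ s₀ - δ/4 := by rw [hpe]; linarith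
  have hi2q : s₀ + δ/4 ≤ q := by rw [hqe]; linarith
  have hImid : IntervalIntegrable (fun x => (c ⬝ᵥ Fv x) * ψ x) volume (s₀ - δ/4) (s₀ + δ/4) := by
    apply hIh.mono_set
    rw [uIcc_of_le hi1i2, uIcc_of_le hpq]
    exact Icc_subset_Icc hpi1 hi2q
  have hmidpos : 0 < ∫ x in (s₀ - δ/4)..(s₀ + δ/4), (c ⬝ᵥ Fv x) * ψ x := by
    apply intervalIntegral.intervalIntegral_pos_of_pos_on hImid
    · intro x hx
      have hψ1' : ψ x = 1 := by
        apply ψ.one_of_mem_closedBall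
        rw [Metric.mem_closedBall, Real.dist_eq, abs_le]
        constructor
        · have := hx.1; simp only [hψe]; linarith
        · have := hx.2; simp only [hψe]; linarith
      have hcF : 0 < c ⬝ᵥ Fv x := by
        refine (hδ x ?_).1
        rw [Real.dist_eq, abs_lt]
        constructor
        · have := hx.1; linarith
        · have := hx.2; linarith
      rw [hψ1', mul_one]
      exact hcF
    · linarith
  have hIleft : IntervalIntegrable (fun x => (c ⬝ᵥ Fv x) * ψ x) volume p (s₀ - δ/4) := by
    apply hIh.mono_set
    rw [uIcc_of_le hpi1, uIcc_of_le hpq]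
    exact Icc_subset_Icc le_rfl (le_trans hi1i2 hi2q)
  have hIright : IntervalIntegrable (fun x => (c ⬝ᵥ Fv x) * ψ x) volume (s₀ + δ/4) q := by
    apply hIh.mono_set
    rw [uIcc_of_le hi2q, uIcc_of_le hpq]
    exact Icc_subset_Icc (le_trans hpi1 hi1i2) le_rfl
  have hleftnn : 0 ≤ ∫ x in p..(s₀ - δ/4), (c ⬝ᵥ Fv x) * ψ x := by
    apply intervalIntegral.integral_nonneg hpi1
    intro x hx
    exact hnonneg x ⟨hx.1, le_trans hx.2 (le_trans hi1i2 hi2q)⟩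
  have hrightnn : 0 ≤ ∫ x in (s₀ + δ/4)..q, (c ⬝ᵥ Fv x) * ψ x := by
    apply intervalIntegral.integral_nonneg hi2q
    intro x hx
    exact hnonneg x ⟨le_trans hpi1 (le_trans hi1i2 hx.1), hx.2⟩
  have hsum1 := intervalIntegral.integral_add_adjacent_intervals hIleft hImid
  have hsum2 := intervalIntegral.integral_add_adjacent_intervals (hIleft.trans hImid) hIright
  rw [← hsum1] at hsum2
  have : 0 < ∫ x in p..q, (c ⬝ᵥ Fv x) * ψ x := by
    rw [← hsum2]
    linarith
  rw [hkey] at hmid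
  linarith
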